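/- Let (g,h) be a pair of binary sequences, each of even length m > 2, with f_s = C_{g,g}(s) + C_{h,h}(s). Suppose (g,h) is not a Golay pair, f_s = 0 for all nonzero s except possibly two values of s, and |f_s| ≤ 2 for all nonzero s. Then f_{m/2} = f_{-m/2} ∈ {2, -2} and f_s = 0 for all s ∉ {0, m/2, -m/2}. -/

import Mathlib

set_option linter.unnecessarySeqFocus false

lemma sum_range_int (m : ℕ) (F : ℤ → ℤ) :
    (∑ j ∈ Finset.range m, F (j : ℤ)) = ∑ j ∈ Finset.Icc (0:ℤ) ((m:ℤ) - 1), F j := by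
  apply Finset.sum_nbij' (fun (j : ℕ) => (j : ℤ)) (fun j => j.toNat) <;>
    intros a ha <;> simp only [Finset.mem_range, Finset.mem_Icc] at * <;> try omega

lemma ext_sum (m : ℕ) (F : ℤ → ℤ)
    (h0 : ∀ j : ℤ, j < 0 ∨ (m:ℤ) ≤ j → F j = 0) (L U : ℤ) (hL : L ≤ 0) (hU : (m:ℤ) - 1 ≤ U) :
    (∑ j ∈ Finset.Icc L U, F j) = ∑ j ∈ Finset.Icc (0:ℤ) ((m:ℤ)-1), F j := by
  symm
  apply Finset.sum_subset
  · intro x hx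
    simp only [Finset.mem_Icc] at *
    omega
  · intro x hx hx'
    apply h0
    simp only [Finset.mem_Icc] at *
    omega

lemma corr_symm (m : ℕ) (a : ℤ → ℤ)
    (ha0 : ∀ j : ℤ, j < 0 ∨ (m:ℤ) ≤ j → a j = 0) (s : ℤ) :
    (∑ j ∈ Finset.range m, a ((j:ℤ) + -s) * a (j:ℤ)) =
    ∑ j ∈ Finset.range m, a ((j:ℤ) + s) * a (j:ℤ) := by
  have hzero1 : ∀ j : ℤ, j < 0 ∨ (m:ℤ) ≤ j → a (j + -s) * a j = 0 :=
    fun j hj => by rw [ha0 j hj, mul_zero]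
  have hzero2 : ∀ j : ℤ, j < 0 ∨ (m:ℤ) ≤ j → a j * a (j + s) = 0 :=
    fun j hj => by rw [ha0 j hj, zero_mul]
  have habs0 : (0:ℤ) ≤ |s| := abs_nonneg s
  have habs1 : -s ≤ |s| := neg_le_abs s
  have habs2 : s ≤ |s| := le_abs_self s
  have hre : ∑ j ∈ Finset.Icc (-|s|) ((m:ℤ) - 1 + |s|), a (j + -s) * a j
      = ∑ j ∈ Finset.Icc (-|s| - s) ((m:ℤ) - 1 + |s| - s), a j * a (j + s) := by
    apply Finset.sum_nbij' (fun j => j - s) (fun j => j + s) <;>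
      intro x hx <;> simp only [Finset.mem_Icc] at * <;> try omega
    · congr 1 <;> congr 1 <;> ring
  rw [sum_range_int m (fun j => a (j + -s) * a j), sum_range_int m (fun j => a (j + s) * a j)]
  rw [← ext_sum m (fun j => a (j + -s) * a j) hzero1 (-|s|) ((m:ℤ) - 1 + |s|) (by omega) (by omega)]
  rw [hre]
  rw [ext_sum m (fun j => a j * a (j + s)) hzero2 (-|s| - s) ((m:ℤ) - 1 + |s| - s) (by omega) (by omega)]
  exact Finset.sum_congr rfl (fun j _ => mul_comm _ _)

lemma prod_shift (m s' : ℕ) (hs : s' < m) (G : ℕ → ℤ) :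
    (∏ j ∈ Finset.range m, G ((j + s') % m)) = ∏ j ∈ Finset.range m, G j := by
  have hm : 0 < m := by omega
  apply Finset.prod_nbij' (fun j => (j + s') % m) (fun j => (j + (m - s')) % m)
  · intro a ha
    exact Finset.mem_range.mpr (Nat.mod_lt _ hm)
  · intro a ha
    exact Finset.mem_range.mpr (Nat.mod_lt _ hm)
  · intro a ha
    have haa : a < m := Finset.mem_range.mp ha
    rw [Nat.mod_add_mod]
    have h1 : a + s' + (m - s') = a + m := by omega
    rw [h1, Nat.add_mod_right, Nat.mod_eq_of_lt haa]
  · intro a ha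
    have haa : a < m := Finset.mem_range.mp ha
    rw [Nat.mod_add_mod]
    have h1 : a + (m - s') + s' = a + m := by omega
    rw [h1, Nat.add_mod_right, Nat.mod_eq_of_lt haa]
  · intro a ha
    rfl

lemma sum_pm_mod4 (S : Finset ℕ) (b : ℕ → ℤ)
    (hb : ∀ j ∈ S, b j = 1 ∨ b j = -1) (hprod : ∏ j ∈ S, b j = 1) :
    (4:ℤ) ∣ (∑ j ∈ S, b j) - (S.card : ℤ) := by
  classical
  have hsplit := Finset.sum_filter_add_sum_filter_not S (fun j => b j = -1) b
  have hpsplit := Finset.prod_filter_mul_prod_filter_not S (fun j => b j = -1) b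
  set T := S.filter (fun j => b j = -1) with hT
  set T' := S.filter (fun j => ¬ b j = -1) with hT'
  have hsT : ∑ j ∈ T, b j = -(T.card : ℤ) := by
    rw [Finset.sum_congr rfl (fun j hj => (Finset.mem_filter.mp hj).2)]
    simp
    rfl
  have hbT' : ∀ j ∈ T', b j = 1 := by
    intro j hj
    have h := Finset.mem_filter.mp hj
    rcases hb j h.1 with h1 | h1
    · exact h1
    · exact absurd h1 h.2
  have hsT' : ∑ j ∈ T', b j = (T'.card : ℤ) := by
    rw [Finset.sum_congr rfl hbT']
    simp
  have hpT : ∏ j ∈ T, b j = (-1) ^ T.card := by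
    rw [Finset.prod_congr rfl (fun j hj => (Finset.mem_filter.mp hj).2)]
    simp
    rfl
  have hpT' : ∏ j ∈ T', b j = 1 := Finset.prod_eq_one hbT'
  have heT : Even T.card := by
    by_contra hodd
    rw [Nat.not_even_iff_odd] at hodd
    rw [hpT, hpT', mul_one, hprod, Odd.neg_one_pow hodd] at hpsplit
    norm_num at hpsplit
  have hcards : T.card + T'.card = S.card :=
    Finset.card_filter_add_card_filter_not (p := fun j => b j = -1)
  obtain ⟨k, hk⟩ := heT
  rw [← hsplit, hsT, hsT']
  omega

theorem near_complementary_even_characterization (m : ℕ) (heven : Even m) (hm : 2 < m)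
    (g h : ℤ → ℤ)
    (hg1 : ∀ j : ℤ, 0 ≤ j → j < (m : ℤ) → g j = 1 ∨ g j = -1)
    (hg0 : ∀ j : ℤ, j < 0 ∨ (m : ℤ) ≤ j → g j = 0)
    (hh1 : ∀ j : ℤ, 0 ≤ j → j < (m : ℤ) → h j = 1 ∨ h j = -1)
    (hh0 : ∀ j : ℤ, j < 0 ∨ (m : ℤ) ≤ j → h j = 0)
    (f : ℤ → ℤ)
    (hf : ∀ s : ℤ, f s = (∑ j ∈ Finset.range m, g ((j : ℤ) + s) * g (j : ℤ))
        + ∑ j ∈ Finset.range m, h ((j : ℤ) + s) * h (j : ℤ))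
    (hnotgolay : ¬ (∀ s : ℤ, s ≠ 0 → f s = 0))
    (hsupport : ∃ t₁ t₂ : ℤ, ∀ s : ℤ, s ≠ 0 → s ≠ t₁ → s ≠ t₂ → f s = 0)
    (hbound : ∀ s : ℤ, s ≠ 0 → |f s| ≤ 2) :
    f ((m : ℤ) / 2) = f (-((m : ℤ) / 2)) ∧
    (f ((m : ℤ) / 2) = 2 ∨ f ((m : ℤ) / 2) = -2) ∧
    (∀ s : ℤ, s ≠ 0 → s ≠ (m : ℤ) / 2 → s ≠ -((m : ℤ) / 2) → f s = 0) := by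
  -- symmetry of f
  have fsymm : ∀ s : ℤ, f (-s) = f s := by
    intro s
    rw [hf, hf, corr_symm m g hg0 s, corr_symm m h hh0 s]
  -- vanishing for |s| ≥ m
  have fzero : ∀ s : ℤ, (m:ℤ) ≤ s ∨ s ≤ -(m:ℤ) → f s = 0 := by
    intro s hs
    rw [hf]
    have key : ∀ (a : ℤ → ℤ), (∀ j : ℤ, j < 0 ∨ (m:ℤ) ≤ j → a j = 0) →
        ∑ j ∈ Finset.range m, a ((j:ℤ) + s) * a (j:ℤ) = 0 := by
      intro a ha
      apply Finset.sum_eq_zero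
      intro j hj
      have hj' : (j:ℤ) < m := by exact_mod_cast Finset.mem_range.mp hj
      have hj0 : (0:ℤ) ≤ (j:ℤ) := Int.ofNat_nonneg j
      rw [ha ((j:ℤ) + s) (by omega), zero_mul]
    rw [key g hg0, key h hh0, add_zero]
  -- f s is even
  have feven : ∀ s : ℤ, (2:ℤ) ∣ f s := by
    intro s
    rw [hf s, ← Finset.sum_add_distrib]
    apply Finset.dvd_sum
    intro j hj
    have hj' : (j:ℤ) < m := by exact_mod_cast Finset.mem_range.mp hj
    have hj0 : (0:ℤ) ≤ (j:ℤ) := Int.ofNat_nonneg j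
    by_cases hcase : 0 ≤ (j:ℤ) + s ∧ (j:ℤ) + s < m
    · rcases hg1 (j:ℤ) hj0 hj' with hgj | hgj <;>
      rcases hh1 (j:ℤ) hj0 hj' with hhj | hhj <;>
      rcases hg1 _ hcase.1 hcase.2 with hgs | hgs <;>
      rcases hh1 _ hcase.1 hcase.2 with hhs | hhs <;>
      rw [hgj, hhj, hgs, hhs] <;> norm_num
    · rw [hg0 ((j:ℤ)+s) (by omega), hh0 ((j:ℤ)+s) (by omega)]
      simp
  -- periodic mod 4 identity
  have fper : ∀ s' : ℕ, 0 < s' → s' < m → (4:ℤ) ∣ f (s':ℤ) + f ((s':ℤ) - (m:ℤ)) := by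
    intro s' hs0 hsm
    have key : ∀ (a : ℤ → ℤ), (∀ j : ℤ, 0 ≤ j → j < (m : ℤ) → a j = 1 ∨ a j = -1) →
        (∀ j : ℤ, j < 0 ∨ (m:ℤ) ≤ j → a j = 0) →
        (4:ℤ) ∣ ((∑ j ∈ Finset.range m, a ((j:ℤ) + (s':ℤ)) * a (j:ℤ))
          + ∑ j ∈ Finset.range m, a ((j:ℤ) + (s':ℤ) - (m:ℤ)) * a (j:ℤ)) - (m:ℤ) := by
      intro a ha1 ha0
      have hterm : ∀ j ∈ Finset.range m,
          a ((j:ℤ) + (s':ℤ)) * a (j:ℤ) + a ((j:ℤ) + (s':ℤ) - (m:ℤ)) * a (j:ℤ)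
          = a (((j + s') % m : ℕ) : ℤ) * a (j:ℤ) := by
        intro j hj
        have hjm : j < m := Finset.mem_range.mp hj
        by_cases hc : j + s' < m
        · have h1 : (j + s') % m = j + s' := Nat.mod_eq_of_lt hc
          have h2 : a ((j:ℤ) + (s':ℤ) - (m:ℤ)) = 0 := ha0 _ (Or.inl (by omega))
          rw [h1, h2, zero_mul, add_zero]
          norm_cast
        · have hlt : j + s' - m < m := by omega
          have h1 : (j + s') % m = j + s' - m := by
            rw [Nat.mod_eq_sub_mod (by omega : m ≤ j + s'), Nat.mod_eq_of_lt hlt]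
          have h2 : a ((j:ℤ) + (s':ℤ)) = 0 := ha0 _ (Or.inr (by omega))
          rw [h1, h2, zero_mul, zero_add]
          congr 2
          push_cast [Nat.cast_sub (by omega : m ≤ j + s')]
          ring
      rw [← Finset.sum_add_distrib, Finset.sum_congr rfl hterm]
      have hb : ∀ j ∈ Finset.range m,
          a (((j + s') % m : ℕ) : ℤ) * a (j:ℤ) = 1 ∨
          a (((j + s') % m : ℕ) : ℤ) * a (j:ℤ) = -1 := by
        intro j hj
        have hjm : j < m := Finset.mem_range.mp hj
        have hmod : (j + s') % m < m := Nat.mod_lt _ (by omega)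
        rcases ha1 (((j + s') % m : ℕ) : ℤ) (Int.ofNat_nonneg _) (by exact_mod_cast hmod)
          with h1 | h1 <;>
        rcases ha1 (j:ℤ) (Int.ofNat_nonneg _) (by exact_mod_cast hjm) with h2 | h2 <;>
        rw [h1, h2] <;> norm_num
      have hprod : ∏ j ∈ Finset.range m, (a (((j + s') % m : ℕ) : ℤ) * a (j:ℤ)) = 1 := by
        rw [Finset.prod_mul_distrib, prod_shift m s' hsm (fun n => a (n:ℤ)),
          ← Finset.prod_mul_distrib]
        apply Finset.prod_eq_one
        intro j hj
        have hjm : j < m := Finset.mem_range.mp hj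
        rcases ha1 (j:ℤ) (Int.ofNat_nonneg _) (by exact_mod_cast hjm) with h2 | h2 <;>
          rw [h2] <;> norm_num
      have hres := sum_pm_mod4 (Finset.range m) _ hb hprod
      rwa [Finset.card_range] at hres
    have hkg := key g hg1 hg0
    have hkh := key h hh1 hh0
    have hBg : ∑ j ∈ Finset.range m, g ((j:ℤ) + ((s':ℤ) - (m:ℤ))) * g (j:ℤ)
        = ∑ j ∈ Finset.range m, g ((j:ℤ) + (s':ℤ) - (m:ℤ)) * g (j:ℤ) :=
      Finset.sum_congr rfl (fun j _ => by rw [← add_sub_assoc])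
    have hBh : ∑ j ∈ Finset.range m, h ((j:ℤ) + ((s':ℤ) - (m:ℤ))) * h (j:ℤ)
        = ∑ j ∈ Finset.range m, h ((j:ℤ) + (s':ℤ) - (m:ℤ)) * h (j:ℤ) :=
      Finset.sum_congr rfl (fun j _ => by rw [← add_sub_assoc])
    have hfg1 := hf (s':ℤ)
    have hfg2 := hf ((s':ℤ) - (m:ℤ))
    rw [hBg, hBh] at hfg2
    have h2m : (4:ℤ) ∣ 2 * (m:ℤ) := by
      obtain ⟨k, hk⟩ := heven
      exact ⟨(k:ℤ), by push_cast [hk]; ring⟩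
    omega
  -- extract the nonzero support point
  push_neg at hnotgolay
  obtain ⟨t, ht0, htf⟩ := hnotgolay
  obtain ⟨t₁, t₂, hsup⟩ := hsupport
  set t' : ℕ := t.natAbs with ht'def
  have htcast : ((t':ℕ):ℤ) = t ∨ ((t':ℕ):ℤ) = -t := by omega
  have htf' : f (t':ℤ) ≠ 0 := by
    rcases htcast with he | he
    · rw [he]; exact htf
    · rw [he, show -t = -(t) by ring]
      rw [fsymm]; exact htf
  have ht'0 : 0 < t' := by omega
  have ht'm : t' < m := by
    by_contra hcon
    exact htf' (fzero _ (Or.inl (by omega)))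
  have hft2 : f (t':ℤ) = 2 ∨ f (t':ℤ) = -2 := by
    have h1 := feven (t':ℤ)
    have h2 := hbound (t':ℤ) (by omega)
    rw [abs_le] at h2
    omega
  have m1 : (t':ℤ) = t₁ ∨ (t':ℤ) = t₂ := by
    by_contra hc
    push_neg at hc
    exact htf' (hsup _ (by omega) hc.1 hc.2)
  have hfnt : f (-(t':ℤ)) ≠ 0 := by rw [fsymm]; exact htf'
  have m2 : -(t':ℤ) = t₁ ∨ -(t':ℤ) = t₂ := by
    by_contra hc
    push_neg at hc
    exact hfnt (hsup _ (by omega) hc.1 hc.2)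
  have hhalf : 2 * t' = m := by
    by_contra hne
    set u : ℕ := m - t' with hu
    have hum : ((u:ℕ):ℤ) = (m:ℤ) - (t':ℤ) := by omega
    have h4 := fper t' ht'0 ht'm
    have hfu : f ((t':ℤ) - (m:ℤ)) = f (u:ℤ) := by
      rw [show (t':ℤ) - (m:ℤ) = -((u:ℕ):ℤ) by omega, fsymm]
    rw [hfu] at h4
    have hfu2 : f (u:ℤ) ≠ 0 := by
      intro hz
      rw [hz, add_zero] at h4
      rcases hft2 with hv | hv <;> rw [hv] at h4 <;> omega
    have hfnu : f (-(u:ℤ)) ≠ 0 := by rw [fsymm]; exact hfu2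
    have m3 : (u:ℤ) = t₁ ∨ (u:ℤ) = t₂ := by
      by_contra hc
      push_neg at hc
      exact hfu2 (hsup _ (by omega) hc.1 hc.2)
    have m4 : -(u:ℤ) = t₁ ∨ -(u:ℤ) = t₂ := by
      by_contra hc
      push_neg at hc
      exact hfnu (hsup _ (by omega) hc.1 hc.2)
    omega
  have hm2 : (m:ℤ) / 2 = (t':ℤ) := by omega
  refine ⟨?_, ?_, ?_⟩
  · exact (fsymm _).symm
  · rw [hm2]; exact hft2
  · intro s hs0 hs1 hs2
    rw [hm2] at hs1 hs2
    exact hsup s hs0 (by omega) (by omega)
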